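/- arXiv:0808.0416 — 7 statements merged into one kernel-verified Lean document; each statement's English description precedes it below -/
import Mathlib

section
/- Let V be a complex vector space and ∇, Γ : V → V linear maps with ∇ ∘ ∇ = 0 and Γ ∘ Γ = id, and set B := Γ ∘ ∇ + ∇ ∘ Γ. If B is bijective, then V decomposes as the (internal) direct sum V = ker(∇ ∘ Γ) ⊕ ker(Γ ∘ ∇); that is, the two subspaces ker(∇ ∘ Γ) and ker(Γ ∘ ∇) have trivial intersection and together span V. -/
/-- The decomposition (hilbert-decomposition) of the paper: for a differential
`∇` (`∇ ∘ ∇ = 0`) and a chirality operator `Γ` (`Γ ∘ Γ = id`) on a complex vector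
space `V`, bijectivity of the odd-signature operator `B = Γ∇ + ∇Γ` yields the
internal direct sum decomposition `V = ker(∇ ∘ Γ) ⊕ ker(Γ ∘ ∇)`: the two kernels
have trivial intersection and together span `V`. -/
theorem decomposition_of_bijective_oddSignature
    {V : Type*} [AddCommGroup V] [Module ℂ V]
    (N G : V →ₗ[ℂ] V)
    (hN : N ∘ₗ N = 0) (hG : G ∘ₗ G = LinearMap.id)
    (hB : Function.Bijective (G ∘ₗ N + N ∘ₗ G)) :
    LinearMap.ker (N ∘ₗ G) ⊓ LinearMap.ker (G ∘ₗ N) = ⊥ ∧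
    LinearMap.ker (N ∘ₗ G) ⊔ LinearMap.ker (G ∘ₗ N) = ⊤ := by
  have hG' : ∀ v, G (G v) = v := fun v => by
    have := LinearMap.congr_fun hG v; simpa using this
  have hN' : ∀ v, N (N v) = 0 := fun v => by
    have := LinearMap.congr_fun hN v; simpa using this
  constructor
  · rw [Submodule.eq_bot_iff]
    rintro x hx
    have h1 : N (G x) = 0 := hx.1
    have h2 : G (N x) = 0 := hx.2
    apply hB.1
    simp [h1, h2]
  · rw [eq_top_iff]
    intro v _
    obtain ⟨w, hw⟩ := hB.2 v
    obtain ⟨u, hu⟩ := hB.2 w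
    refine Submodule.mem_sup.2 ⟨G (N (G (N u))), ?_, N (G (N (G u))), ?_, ?_⟩
    · simp [LinearMap.mem_ker, hG', hN']
    · simp [LinearMap.mem_ker, hG', hN']
    · subst hu hw
      simp [map_add, hG', hN']
end

section
/- Let V be a complex vector space and ∇, Γ : V → V linear maps with ∇ ∘ ∇ = 0 and Γ ∘ Γ = id, and set B := Γ ∘ ∇ + ∇ ∘ Γ. If B is bijective, then ∇ restricts to a linear bijection from ker(∇ ∘ Γ) onto ker(Γ ∘ ∇). -/
/-- The bijectivity claim (bijective-two) in the proof of Theorem 4.4 of the paper: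
for a differential `∇` (`∇ ∘ ∇ = 0`) and a chirality operator `Γ` (`Γ ∘ Γ = id`)
on a complex vector space `V`, if the odd-signature operator `B = Γ∇ + ∇Γ` is
bijective, then `∇` restricts to a linear bijection from `ker(∇ ∘ Γ)` onto
`ker(Γ ∘ ∇)`.  (Note `∇` maps `ker(∇Γ)` into `ker(Γ∇)` automatically since
`∇² = 0`; this is the hypothesis `hmap`.) -/
theorem restrict_bijective_of_bijective_oddSignature
    {V : Type*} [AddCommGroup V] [Module ℂ V]
    (N G : V →ₗ[ℂ] V)
    (hN : N ∘ₗ N = 0) (hG : G ∘ₗ G = LinearMap.id)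
    (hB : Function.Bijective (G ∘ₗ N + N ∘ₗ G))
    (hmap : ∀ x ∈ LinearMap.ker (N ∘ₗ G), N x ∈ LinearMap.ker (G ∘ₗ N)) :
    Function.Bijective (N.restrict hmap) := by
  have hGG : ∀ v, G (G v) = v := fun v => by
    have := DFunLike.congr_fun hG v
    simpa using this
  have hNN : ∀ v, N (N v) = 0 := fun v => by
    have := DFunLike.congr_fun hN v
    simpa using this
  constructor
  · rintro ⟨x, hx⟩ ⟨y, hy⟩ hxy
    have hx' : N (G x) = 0 := by simpa [LinearMap.mem_ker] using hx
    have hy' : N (G y) = 0 := by simpa [LinearMap.mem_ker] using hy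
    have hNxy : N x = N y := congrArg Subtype.val hxy
    set z := x - y with hz
    have hzN : N z = 0 := by rw [hz, map_sub, hNxy, sub_self]
    have hzNG : N (G z) = 0 := by rw [hz, map_sub, map_sub, hx', hy', sub_self]
    have hBz : (G ∘ₗ N + N ∘ₗ G) (G z) = 0 := by
      simp [LinearMap.add_apply, LinearMap.comp_apply, hGG, hzN, hzNG]
    have hGz : G z = 0 := by
      have := hB.injective (a₁ := G z) (a₂ := 0) (by simpa using hBz)
      exact this
    have hz0 : z = 0 := by rw [← hGG z, hGz, map_zero]
    exact Subtype.ext (sub_eq_zero.mp hz0)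
  · rintro ⟨y, hy⟩
    have hNy : N y = 0 := by
      have hGNy : G (N y) = 0 := by simpa [LinearMap.mem_ker] using hy
      have := congrArg G hGNy
      rwa [hGG, map_zero] at this
    obtain ⟨u, hu⟩ := hB.surjective y
    have hNGNu : N (G (N u)) = 0 := by
      have := congrArg N hu
      rw [hNy] at this
      simpa [LinearMap.add_apply, LinearMap.comp_apply, hNN] using this
    have hNu : N u = 0 := by
      apply hB.injective (a₁ := N u) (a₂ := 0)
      simp [LinearMap.add_apply, LinearMap.comp_apply, hNN, hNGNu]
    have hGuMem : G u ∈ LinearMap.ker (N ∘ₗ G) := by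
      simp [LinearMap.mem_ker, LinearMap.comp_apply, hGG, hNu]
    refine ⟨⟨G u, hGuMem⟩, ?_⟩
    apply Subtype.ext
    show N (G u) = y
    have : G (N u) + N (G u) = y := by
      simpa [LinearMap.add_apply, LinearMap.comp_apply] using hu
    rw [hNu, map_zero, zero_add] at this
    exact this
end

section
/- Let m be an odd natural number, V a complex vector space which is an internal direct sum V = ⊕_{k=0}^m V^k of subspaces, and ∇, Γ : V → V linear maps with ∇ ∘ ∇ = 0, Γ ∘ Γ = id, ∇(V^k) ⊆ V^{k+1} for all k (where V^j := {0} for j > m), and Γ(V^k) ⊆ V^{m−k} for all k. Set B := Γ ∘ ∇ + ∇ ∘ Γ. If B is bijective, then for every k the map Γ ∘ ∇ restricts to a linear bijection from V^k ∩ ker(∇ ∘ Γ) onto V^{m−k−1} ∩ ker(∇ ∘ Γ). -/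
open DirectSum in
lemma graded_component_eq
    {V : Type*} [AddCommGroup V] [Module ℂ V]
    (W : ℤ → Submodule ℂ V) [DirectSum.Decomposition W]
    (f : V →ₗ[ℂ] V) (σ : ℤ → ℤ) (hσ : Function.Injective σ)
    (hf : ∀ j : ℤ, ∀ x ∈ W j, f x ∈ W (σ j)) (x : V) (j : ℤ) :
    f (DirectSum.decompose W x j : V) =
      (DirectSum.decompose W (f x) (σ j) : V) := by
  classical
  conv_rhs => rw [← DirectSum.sum_support_decompose W x]
  rw [map_sum, DirectSum.decompose_sum, DFinsupp.finset_sum_apply]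
  push_cast
  rw [Finset.sum_eq_single j]
  · exact (DirectSum.decompose_of_mem_same W
      (hf j _ (decompose W x j).2)).symm
  · intro b _ hbj
    exact DirectSum.decompose_of_mem_ne W
      (hf b _ (decompose W x b).2) (fun h => hbj (hσ h))
  · intro hj
    have h0 : (decompose W x j : V) = 0 := by
      rw [DFinsupp.notMem_support_iff.mp hj]; rfl
    rw [h0, map_zero, DirectSum.decompose_zero]; rfl

/-- The isomorphism (stern1) in the proof of Lemma 4.8 of the paper: let `V` be a
complex vector space, graded as an internal direct sum `V = ⊕_{k=0}^m V^k`
(modeled by `W : ℤ → Submodule ℂ V` with `W j = 0` for `j < 0` or `j > m`), with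
`m` odd, `∇` a differential of degree `+1`, `Γ` a chirality operator with
`Γ(V^k) ⊆ V^{m-k}`.  If the odd-signature operator `B = Γ∇ + ∇Γ` is bijective,
then for every `k` the map `Γ ∘ ∇` restricts to a linear bijection from
`V^k ∩ ker(∇ ∘ Γ)` onto `V^{m-k-1} ∩ ker(∇ ∘ Γ)`. -/
theorem gammaNabla_restrict_bijective
    {V : Type*} [AddCommGroup V] [Module ℂ V]
    (m : ℕ) (hm : Odd m)
    (W : ℤ → Submodule ℂ V)
    (hbot : ∀ j : ℤ, (j < 0 ∨ (m : ℤ) < j) → W j = ⊥)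
    (hinternal : DirectSum.IsInternal W)
    (N G : V →ₗ[ℂ] V)
    (hN : N ∘ₗ N = 0) (hG : G ∘ₗ G = LinearMap.id)
    (hNdeg : ∀ k : ℤ, Submodule.map N (W k) ≤ W (k + 1))
    (hGdeg : ∀ k : ℤ, Submodule.map G (W k) ≤ W ((m : ℤ) - k))
    (hB : Function.Bijective (G ∘ₗ N + N ∘ₗ G)) :
    ∀ (k : ℤ)
      (hmap : ∀ x ∈ W k ⊓ LinearMap.ker (N ∘ₗ G),
        (G ∘ₗ N) x ∈ W ((m : ℤ) - k - 1) ⊓ LinearMap.ker (N ∘ₗ G)),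
      Function.Bijective ((G ∘ₗ N).restrict hmap) := by
  classical
  intro k hmap
  set B : V →ₗ[ℂ] V := G ∘ₗ N + N ∘ₗ G with hBdef
  have hGG : ∀ v : V, G (G v) = v := fun v => congrFun (congrArg DFunLike.coe hG) v
  have hNN : ∀ v : V, N (N v) = 0 := fun v => congrFun (congrArg DFunLike.coe hN) v
  have hBapp : ∀ v : V, B v = G (N v) + N (G v) := fun v => rfl
  -- B commutes with N ∘ G
  have hcomm : ∀ v : V, (N ∘ₗ G) (B v) = B ((N ∘ₗ G) v) := by
    intro v
    simp only [LinearMap.comp_apply, hBapp, map_add, hGG, hNN, map_zero,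
      add_zero, zero_add]
  -- degree shifts
  have hGNdeg : ∀ j : ℤ, ∀ x ∈ W j, (G ∘ₗ N) x ∈ W ((m : ℤ) - j - 1) := by
    intro j x hx
    have h1 : N x ∈ W (j + 1) := hNdeg j ⟨x, hx, rfl⟩
    have h2 : G (N x) ∈ W ((m : ℤ) - (j + 1)) := hGdeg _ ⟨N x, h1, rfl⟩
    simpa [sub_add_eq_sub_sub] using h2
  have hNGdeg : ∀ j : ℤ, ∀ x ∈ W j, (N ∘ₗ G) x ∈ W ((m : ℤ) - j + 1) := by
    intro j x hx
    have h1 : G x ∈ W ((m : ℤ) - j) := hGdeg j ⟨x, hx, rfl⟩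
    exact hNdeg _ ⟨G x, h1, rfl⟩
  letI : DirectSum.Decomposition W := hinternal.chooseDecomposition
  constructor
  · -- injectivity
    intro a b hab
    ext
    apply hB.1
    have hGNab : (G ∘ₗ N) (a : V) = (G ∘ₗ N) (b : V) :=
      congrArg Subtype.val hab
    have hNGa : (N ∘ₗ G) (a : V) = 0 := a.2.2
    have hNGb : (N ∘ₗ G) (b : V) = 0 := b.2.2
    show B (a : V) = B (b : V)
    simp only [hBdef, LinearMap.add_apply, hGNab,
      show (N ∘ₗ G) (a : V) = (N ∘ₗ G) (b : V) from hNGa.trans hNGb.symm]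
  · -- surjectivity
    rintro ⟨y, hyW, hyK⟩
    obtain ⟨x, hx⟩ := hB.2 y
    have hNGy : (N ∘ₗ G) y = 0 := hyK
    -- N ∘ G kills x
    have hNGx : (N ∘ₗ G) x = 0 := by
      apply hB.1
      show B ((N ∘ₗ G) x) = B 0
      rw [map_zero, ← hcomm, hx, hNGy]
    have hGNx : (G ∘ₗ N) x = y := by
      have := hx
      rw [hBdef] at this
      simpa [hNGx] using this
    -- components of x in degrees other than k vanish
    have hcompNG : ∀ j : ℤ, (N ∘ₗ G) (DirectSum.decompose W x j : V) = 0 := by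
      intro j
      rw [graded_component_eq W (N ∘ₗ G) (fun j => (m : ℤ) - j + 1)
        (fun a b h => by dsimp only at h; omega) hNGdeg, hNGx, DirectSum.decompose_zero]
      rfl
    have hcompGN : ∀ j : ℤ, j ≠ k →
        (G ∘ₗ N) (DirectSum.decompose W x j : V) = 0 := by
      intro j hjk
      rw [graded_component_eq W (G ∘ₗ N) (fun j => (m : ℤ) - j - 1)
        (fun a b h => by dsimp only at h; omega) hGNdeg, hGNx]
      exact DirectSum.decompose_of_mem_ne W hyW (fun h => hjk (by omega))
    have hzero : ∀ j : ℤ, j ≠ k → (DirectSum.decompose W x j : V) = 0 := by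
      intro j hjk
      apply hB.1
      show B _ = B 0
      rw [map_zero, hBdef, LinearMap.add_apply, hcompGN j hjk, hcompNG j,
        add_zero]
    -- hence x ∈ W k
    have hxeq : x = (DirectSum.decompose W x k : V) := by
      conv_lhs => rw [← DirectSum.sum_support_decompose W x]
      apply Finset.sum_eq_single k
      · intro b _ hbk
        exact hzero b hbk
      · intro hk
        rw [DFinsupp.notMem_support_iff.mp hk]; rfl
    have hxW : x ∈ W k := hxeq ▸ (DirectSum.decompose W x k).2
    have hxmem : x ∈ W k ⊓ LinearMap.ker (N ∘ₗ G) := ⟨hxW, hNGx⟩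
    refine ⟨⟨x, hxmem⟩, ?_⟩
    ext
    simpa [LinearMap.restrict_apply] using hGNx
end

section
/- Let m be an odd natural number, V a complex vector space which is an internal direct sum V = ⊕_{k=0}^m V^k of subspaces, and ∇, Γ : V → V linear maps with ∇ ∘ ∇ = 0, Γ ∘ Γ = id, ∇(V^k) ⊆ V^{k+1} for all k (where V^j := {0} for j > m), and Γ(V^k) ⊆ V^{m−k} for all k. Set B := Γ ∘ ∇ + ∇ ∘ Γ. If B is bijective, then for every k the map ∇ ∘ Γ restricts to a linear bijection from V^k ∩ ker(Γ ∘ ∇) onto V^{m−k+1} ∩ ker(Γ ∘ ∇) (where V^{m+1} := {0}, so in particular V^0 ∩ ker(Γ ∘ ∇) = {0}). -/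
/-!
Write `B = GN + NG`. From `N² = 0` and `G² = 1` we get `GN ∘ NG = 0` and `NG ∘ GN = 0`. On
`ker GN` the operator `B` agrees with `NG`, so `NG` is injective there. Given `y ∈ ker GN`, write
`y = B w`: then `GN w` lies in `ker GN ∩ ker NG ⊆ ker B = 0`, so `y = NG w`, and writing
`w = B v` gives `y = NG (NG v)` with `NG v ∈ ker GN`. Finally `GN` and `NG` shift degrees
injectively (`k ↦ m - k - 1` and `k ↦ m - k + 1`), so the degree-`k` component of `NG v` still
lies in `ker GN` and is mapped onto `y`.
-/

open DirectSum

theorem DirectSum.decompose_map_apply_of_mapsTo {ι κ R M M' : Type*} [DecidableEq ι]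
    [DecidableEq κ] [Semiring R] [AddCommMonoid M] [Module R M] [AddCommMonoid M'] [Module R M']
    (W : ι → Submodule R M) (W' : κ → Submodule R M') [Decomposition W] [Decomposition W']
    (L : M →ₗ[R] M') {f : ι → κ} (hf : Function.Injective f)
    (hL : ∀ i, ∀ x ∈ W i, L x ∈ W' (f i)) (x : M) (i : ι) :
    (decompose W' (L x) (f i) : M') = L (decompose W x i) := by
  classical
  conv_lhs => rw [← sum_support_decompose W x, map_sum, decompose_sum]
  rw [DFinsupp.finsetSum_apply, Submodule.coe_sum, Finset.sum_eq_single i]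
  · exact decompose_of_mem_same W' (hL i _ (decompose W x i).2)
  · exact fun j _ hji => decompose_of_mem_ne W' (hL j _ (decompose W x j).2) (hf.ne hji)
  · intro hi
    rw [DFinsupp.notMem_support_iff.mp hi, ZeroMemClass.coe_zero, map_zero, decompose_zero,
      DirectSum.zero_apply, ZeroMemClass.coe_zero]

namespace LinearMap

theorem eq_zero_of_injective_comp_add_comp {R M : Type*} [Semiring R] [AddCommMonoid M]
    [Module R M] {N G : M →ₗ[R] M} (hB : Function.Injective (G ∘ₗ N + N ∘ₗ G)) {v : M}
    (hGN : G (N v) = 0) (hNG : N (G v) = 0) : v = 0 :=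
  hB <| by simp [hGN, hNG]

variable {R M : Type*} [Semiring R] [AddCommGroup M] [Module R M] {N G : M →ₗ[R] M}

theorem injOn_ker_of_injective_comp_add_comp (hB : Function.Injective (G ∘ₗ N + N ∘ₗ G)) :
    Set.InjOn (N ∘ₗ G) (ker (G ∘ₗ N)) := by
  intro a ha b hb hab
  rw [SetLike.mem_coe, mem_ker] at ha hb
  rw [← sub_eq_zero]
  refine eq_zero_of_injective_comp_add_comp hB ?_ ?_
  · simpa using sub_eq_zero.mpr (ha.trans hb.symm)
  · simpa using sub_eq_zero.mpr hab

theorem exists_ker_apply_eq_of_bijective_comp_add_comp (hN : N ∘ₗ N = 0) (hG : G ∘ₗ G = id)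
    (hB : Function.Bijective (G ∘ₗ N + N ∘ₗ G)) {y : M} (hy : G (N y) = 0) :
    ∃ u, G (N u) = 0 ∧ N (G u) = y := by
  have hNN (x : M) : N (N x) = 0 := LinearMap.congr_fun hN x
  have hGG (x : M) : G (G x) = x := LinearMap.congr_fun hG x
  obtain ⟨w, hw⟩ := hB.surjective y
  replace hw : G (N w) + N (G w) = y := by simpa using hw
  have hGNw : G (N w) = 0 := by
    refine eq_zero_of_injective_comp_add_comp hB.injective ?_ (by rw [hGG, hNN])
    simpa [← hw, hNN] using hy
  obtain ⟨v, rfl⟩ := hB.surjective w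
  refine ⟨N (G v), by rw [hNN, map_zero], ?_⟩
  rw [hGNw, zero_add] at hw
  simpa [hGG, hNN] using hw

end LinearMap

theorem nablaGamma_restrict_bijective_general
    {V : Type*} [AddCommGroup V] [Module ℂ V]
    (m : ℕ)
    (W : ℤ → Submodule ℂ V)
    (hinternal : DirectSum.IsInternal W)
    (N G : V →ₗ[ℂ] V)
    (hN : N ∘ₗ N = 0) (hG : G ∘ₗ G = LinearMap.id)
    (hNdeg : ∀ k : ℤ, Submodule.map N (W k) ≤ W (k + 1))
    (hGdeg : ∀ k : ℤ, Submodule.map G (W k) ≤ W ((m : ℤ) - k))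
    (hB : Function.Bijective (G ∘ₗ N + N ∘ₗ G)) :
    ∀ (k : ℤ)
      (hmap : ∀ x ∈ W k ⊓ LinearMap.ker (G ∘ₗ N),
        (N ∘ₗ G) x ∈ W ((m : ℤ) - k + 1) ⊓ LinearMap.ker (G ∘ₗ N)),
      Function.Bijective ((N ∘ₗ G).restrict hmap) := by
  intro k hmap
  let := hinternal.chooseDecomposition
  have hGN (j : ℤ) (x : V) (hx : x ∈ W j) : (G ∘ₗ N) x ∈ W (m - (j + 1)) :=
    hGdeg _ ⟨N x, hNdeg j ⟨x, hx, rfl⟩, rfl⟩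
  have hNG (j : ℤ) (x : V) (hx : x ∈ W j) : (N ∘ₗ G) x ∈ W (m - j + 1) :=
    hNdeg _ ⟨G x, hGdeg j ⟨x, hx, rfl⟩, rfl⟩
  refine ⟨fun a b hab => Subtype.ext <| LinearMap.injOn_ker_of_injective_comp_add_comp
    hB.injective a.2.2 b.2.2 (congrArg Subtype.val hab), ?_⟩
  rintro ⟨y, hyk, hy⟩
  obtain ⟨u, hu, rfl⟩ :=
    LinearMap.exists_ker_apply_eq_of_bijective_comp_add_comp hN hG hB hy
  refine ⟨⟨decompose W u k, (decompose W u k).2, ?_⟩, Subtype.ext ?_⟩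
  · rw [SetLike.mem_coe, LinearMap.mem_ker,
      ← decompose_map_apply_of_mapsTo W W _ (fun i j h => by omega) hGN, LinearMap.comp_apply, hu,
      decompose_zero, DirectSum.zero_apply, ZeroMemClass.coe_zero]
  · change (N ∘ₗ G) (decompose W u k : V) = N (G u)
    rw [← decompose_map_apply_of_mapsTo W W _ (fun i j h => by omega) hNG]
    exact decompose_of_mem_same W hyk

/-- The isomorphism (stern2) in the proof of Lemma 4.8 of the paper: let `V` be a
complex vector space, graded as an internal direct sum `V = ⊕_{k=0}^m V^k`
(modeled by `W : ℤ → Submodule ℂ V` with `W j = 0` for `j < 0` or `j > m`), with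
`m` odd, `∇` a differential of degree `+1`, `Γ` a chirality operator with
`Γ(V^k) ⊆ V^{m-k}`.  If the odd-signature operator `B = Γ∇ + ∇Γ` is bijective,
then for every `k` the map `∇ ∘ Γ` restricts to a linear bijection from
`V^k ∩ ker(Γ ∘ ∇)` onto `V^{m-k+1} ∩ ker(Γ ∘ ∇)` (in particular, since
`V^{m+1} = 0`, the space `V^0 ∩ ker(Γ ∘ ∇)` is trivial). -/
theorem nablaGamma_restrict_bijective
    {V : Type*} [AddCommGroup V] [Module ℂ V]
    (m : ℕ) (hm : Odd m)
    (W : ℤ → Submodule ℂ V)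
    (hbot : ∀ j : ℤ, (j < 0 ∨ (m : ℤ) < j) → W j = ⊥)
    (hinternal : DirectSum.IsInternal W)
    (N G : V →ₗ[ℂ] V)
    (hN : N ∘ₗ N = 0) (hG : G ∘ₗ G = LinearMap.id)
    (hNdeg : ∀ k : ℤ, Submodule.map N (W k) ≤ W (k + 1))
    (hGdeg : ∀ k : ℤ, Submodule.map G (W k) ≤ W ((m : ℤ) - k))
    (hB : Function.Bijective (G ∘ₗ N + N ∘ₗ G)) :
    ∀ (k : ℤ)
      (hmap : ∀ x ∈ W k ⊓ LinearMap.ker (G ∘ₗ N),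
        (N ∘ₗ G) x ∈ W ((m : ℤ) - k + 1) ⊓ LinearMap.ker (G ∘ₗ N)),
      Function.Bijective ((N ∘ₗ G).restrict hmap) :=
  nablaGamma_restrict_bijective_general m W hinternal N G hN hG hNdeg hGdeg hB
end

section
/- Let m be an odd natural number and let d : ℕ → ℤ satisfy d(k) = d(m − k) for all k ≤ m. Then Σ_{k=0}^m (−1)^{k+1} · k · d(k) ≡ m · (Σ_{k=0, k even}^m d(k)) modulo 4. -/
/-!
Pair each even `k ≤ m` with the odd index `m - k`. By the symmetry of `d` the pair contributes
`(m - k) d(k) - k d(k) = m d(k) - 2k d(k)` to the alternating sum, and `2k d(k)` is divisible by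
`4` because `k` is even.
-/

open Finset

theorem sum_filter_odd_eq_sum_filter_even_reflect {M : Type*} [AddCommMonoid M] {m : ℕ} (hm : Odd m)
    (f : ℕ → M) :
    ∑ k ∈ (range (m + 1)).filter Odd, f k = ∑ k ∈ (range (m + 1)).filter Even, f (m - k) := by
  rw [sum_filter, sum_filter, ← sum_range_reflect]
  refine sum_congr rfl fun k hk => ?_
  have hkm : k ≤ m := Nat.lt_succ_iff.mp (mem_range.mp hk)
  have hparity : Odd (m - k) ↔ Even k := by simp [Nat.odd_sub hkm, hm]
  simp only [Nat.add_sub_cancel, hparity]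

theorem neg_one_pow_mul_add_reflect_of_even {m k : ℕ} (hm : Odd m) (hk : Even k) (hkm : k ≤ m)
    (a : ℤ) :
    (-1 : ℤ) ^ (k + 1) * k * a + (-1) ^ (m - k + 1) * ↑(m - k) * a = (m - 2 * k) * a := by
  have hsucc : Even (m - k + 1) := (Nat.Odd.sub_even hkm hm hk).add_one
  rw [(hk.add_one).neg_one_pow, hsucc.neg_one_pow, Nat.cast_sub hkm]
  ring

/-- Arithmetic form of part (i) of Lemma 4.8 of the paper: if `m` is odd and
`d : ℕ → ℤ` satisfies the symmetry `d k = d (m - k)` for `k ≤ m`, then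
`Σ_{k=0}^m (-1)^{k+1} k d(k) ≡ m · Σ_{k even, k ≤ m} d(k)  (mod 4)`. -/
theorem alternating_sum_modeq_four
    (m : ℕ) (hm : Odd m)
    (d : ℕ → ℤ) (hd : ∀ k ≤ m, d k = d (m - k)) :
    (∑ k ∈ Finset.range (m + 1), (-1 : ℤ) ^ (k + 1) * k * d k)
      ≡ (m : ℤ) * ∑ k ∈ (Finset.range (m + 1)).filter (fun k => Even k), d k [ZMOD 4] := by
  have hpaired : ∑ k ∈ range (m + 1), (-1 : ℤ) ^ (k + 1) * k * d k
      = ∑ k ∈ (range (m + 1)).filter Even, (m - 2 * k : ℤ) * d k := by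
    simp_rw [← sum_filter_add_sum_filter_not (range (m + 1)) Even, Nat.not_even_iff_odd,
      sum_filter_odd_eq_sum_filter_even_reflect hm, ← sum_add_distrib]
    refine sum_congr rfl fun k hk => ?_
    obtain ⟨hk, hkeven⟩ := mem_filter.mp hk
    have hkm : k ≤ m := Nat.lt_succ_iff.mp (mem_range.mp hk)
    rw [← hd k hkm, neg_one_pow_mul_add_reflect_of_even hm hkeven hkm]
  rw [hpaired, Int.modEq_iff_dvd, mul_sum, ← sum_sub_distrib]
  refine dvd_sum fun k hk => ?_
  obtain ⟨j, rfl⟩ := (mem_filter.mp hk).2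
  exact ⟨j * d (j + j), by push_cast; ring⟩
end

section
/- Let p ≥ 1 and m = 4p + 1. Let V be a complex vector space which is an internal direct sum V = ⊕_{k=0}^m V^k of finite-dimensional subspaces, and ∇, Γ : V → V linear maps with ∇ ∘ ∇ = 0, Γ ∘ Γ = id, ∇(V^k) ⊆ V^{k+1} for all k (where V^j := {0} for j > m), and Γ(V^k) ⊆ V^{m−k} for all k. If B := Γ ∘ ∇ + ∇ ∘ Γ is bijective, then Σ_{k=0, k even}^m dim V^k ≡ dim (V^{2p} ∩ ker(∇ ∘ Γ)) modulo 2. -/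
/-- Congruence (stern3) in the proof of Lemma 4.8 of the paper: let `m = 4p + 1`
with `p ≥ 1`, let `V` be a complex vector space graded as an internal direct sum
`V = ⊕_{k=0}^m V^k` of finite-dimensional subspaces (modeled by
`W : ℤ → Submodule ℂ V` with `W j = 0` for `j < 0` or `j > m`), with `∇` a
differential of degree `+1` and `Γ` a chirality operator with `Γ(V^k) ⊆ V^{m-k}`.
If the odd-signature operator `B = Γ∇ + ∇Γ` is bijective, then
`Σ_{k even, k ≤ m} dim V^k ≡ dim (V^{2p} ∩ ker(∇ ∘ Γ))  (mod 2)`. -/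
theorem even_dim_sum_modeq_plus_part
    {V : Type*} [AddCommGroup V] [Module ℂ V]
    (p : ℕ) (hp : 1 ≤ p) (m : ℕ) (hm : m = 4 * p + 1)
    (W : ℤ → Submodule ℂ V)
    (hfin : ∀ k : ℤ, FiniteDimensional ℂ (W k))
    (hbot : ∀ j : ℤ, (j < 0 ∨ (m : ℤ) < j) → W j = ⊥)
    (hinternal : DirectSum.IsInternal W)
    (N G : V →ₗ[ℂ] V)
    (hN : N ∘ₗ N = 0) (hG : G ∘ₗ G = LinearMap.id)
    (hNdeg : ∀ k : ℤ, Submodule.map N (W k) ≤ W (k + 1))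
    (hGdeg : ∀ k : ℤ, Submodule.map G (W k) ≤ W ((m : ℤ) - k))
    (hB : Function.Bijective (G ∘ₗ N + N ∘ₗ G)) :
    (∑ k ∈ (Finset.range (m + 1)).filter (fun k => Even k),
        Module.finrank ℂ (W (k : ℤ)))
      ≡ Module.finrank ℂ ↥(W ((2 * p : ℕ) : ℤ) ⊓ LinearMap.ker (N ∘ₗ G)) [MOD 2] := by
  classical
  set L : V →ₗ[ℂ] V := G ∘ₗ N + N ∘ₗ G with hLdef
  -- pointwise algebraic identities
  have hGG : ∀ x : V, G (G x) = x := by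
    intro x
    have := LinearMap.ext_iff.mp hG x
    simpa using this
  have hNN : ∀ x : V, N (N x) = 0 := by
    intro x
    have := LinearMap.ext_iff.mp hN x
    simpa using this
  have hLapp : ∀ x : V, L x = G (N x) + N (G x) := by
    intro x; simp [hLdef]
  -- common injectivity
  have hinj0 : ∀ x : V, N (G x) = 0 → G (N x) = 0 → x = 0 := by
    intro x h1 h2
    apply hB.injective
    show L x = L 0
    rw [hLapp, hLapp, h1, h2]
    simp
  -- elementwise degree facts
  have hNmem : ∀ (k : ℤ) (x : V), x ∈ W k → N x ∈ W (k + 1) := fun k x hx =>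
    hNdeg k ⟨x, hx, rfl⟩
  have hGmem : ∀ (k : ℤ) (x : V), x ∈ W k → G x ∈ W ((m : ℤ) - k) := fun k x hx =>
    hGdeg k ⟨x, hx, rfl⟩
  have hGNmem : ∀ (k : ℤ) (x : V), x ∈ W k → G (N x) ∈ W ((m : ℤ) - 1 - k) := by
    intro k x hx
    have h1 := hGmem (k + 1) (N x) (hNmem k x hx)
    have he : (m : ℤ) - (k + 1) = (m : ℤ) - 1 - k := by ring
    rwa [he] at h1
  have hNGmem : ∀ (k : ℤ) (x : V), x ∈ W k → N (G x) ∈ W ((m : ℤ) + 1 - k) := by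
    intro k x hx
    have h1 := hNmem _ (G x) (hGmem k x hx)
    have he : (m : ℤ) - k + 1 = (m : ℤ) + 1 - k := by ring
    rwa [he] at h1
  set A : Submodule ℂ V := LinearMap.ker (N ∘ₗ G) with hAdef
  set B' : Submodule ℂ V := LinearMap.ker (G ∘ₗ N) with hB'def
  have hmemA : ∀ x : V, x ∈ A ↔ N (G x) = 0 := by
    intro x; simp [hAdef, LinearMap.mem_ker]
  have hmemB' : ∀ x : V, x ∈ B' ↔ G (N x) = 0 := by
    intro x; simp [hB'def, LinearMap.mem_ker]
  -- finite dimensionality instances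
  haveI : ∀ k : ℤ, FiniteDimensional ℂ (W k) := hfin
  -- L2 : dimension decomposition
  have L2 : ∀ k : ℤ, Module.finrank ℂ (W k)
      = Module.finrank ℂ ↥(W k ⊓ A) + Module.finrank ℂ ↥(W k ⊓ B') := by
    intro k
    haveI := hfin k
    -- S = L ∘ L maps W k into W k, bijectively
    have hLL : ∀ x : V, L (L x) = G (N (G (N x))) + N (G (N (G x))) := by
      intro x
      rw [hLapp, hLapp]
      simp only [map_add, hNN, hGG, map_zero]
      abel
    have hPmem : ∀ (x : V), x ∈ W k → G (N (G (N x))) ∈ W k := by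
      intro x hx
      have h1 := hGNmem _ _ (hGNmem k x hx)
      have he : (m : ℤ) - 1 - ((m : ℤ) - 1 - k) = k := by ring
      rwa [he] at h1
    have hQmem : ∀ (x : V), x ∈ W k → N (G (N (G x))) ∈ W k := by
      intro x hx
      have h1 := hNGmem _ _ (hNGmem k x hx)
      have he : (m : ℤ) + 1 - ((m : ℤ) + 1 - k) = k := by ring
      rwa [he] at h1
    have hPA : ∀ x : V, G (N (G (N x))) ∈ A := by
      intro x
      simp [hmemA, hGG, hNN]
    have hQB : ∀ x : V, N (G (N (G x))) ∈ B' := by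
      intro x
      simp [hmemB', hGG, hNN]
    have hSinj : Function.Injective (L ∘ₗ L) := by
      intro x y hxy
      exact hB.injective (hB.injective hxy)
    have hmaple : Submodule.map (L ∘ₗ L) (W k) ≤ W k := by
      rintro y ⟨x, hx, rfl⟩
      show L (L x) ∈ W k
      rw [hLL]
      exact (W k).add_mem (hPmem x hx) (hQmem x hx)
    have hmapeq : Submodule.map (L ∘ₗ L) (W k) = W k := by
      refine Submodule.eq_of_le_of_finrank_le hmaple ?_
      have := LinearEquiv.finrank_eq (Submodule.equivMapOfInjective (L ∘ₗ L) hSinj (W k))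
      omega
    have hsup : W k ≤ (W k ⊓ A) ⊔ (W k ⊓ B') := by
      intro x hx
      obtain ⟨y, hy, hSy⟩ := hmapeq.ge hx
      have hx' : x = G (N (G (N y))) + N (G (N (G y))) := by
        rw [← hSy]
        simp only [LinearMap.comp_apply]
        exact hLL y
      rw [hx']
      exact Submodule.add_mem_sup ⟨hPmem y hy, hPA y⟩ ⟨hQmem y hy, hQB y⟩
    have hdisj : (W k ⊓ A) ⊓ (W k ⊓ B') = ⊥ := by
      rw [eq_bot_iff]
      rintro x ⟨⟨-, hxA⟩, -, hxB⟩
      have := hinj0 x ((hmemA x).1 hxA) ((hmemB' x).1 hxB)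
      simp [this]
    have hsupeq : (W k ⊓ A) ⊔ (W k ⊓ B') = W k :=
      le_antisymm (sup_le inf_le_left inf_le_left) hsup
    have := Submodule.finrank_sup_add_finrank_inf_eq (W k ⊓ A) (W k ⊓ B')
    rw [hsupeq, hdisj, finrank_bot] at this
    omega
  -- L3 : duality for A
  have le_a : ∀ k : ℤ, Module.finrank ℂ ↥(W k ⊓ A)
      ≤ Module.finrank ℂ ↥(W ((m : ℤ) - 1 - k) ⊓ A) := by
    intro k
    haveI := hfin ((m : ℤ) - 1 - k)
    have hresmem : ∀ x ∈ W k ⊓ A, (G ∘ₗ N) x ∈ W ((m : ℤ) - 1 - k) ⊓ A := by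
      rintro x ⟨hx1, hx2⟩
      refine Submodule.mem_inf.2 ⟨hGNmem k x hx1, (hmemA _).2 ?_⟩
      show N (G (G (N x))) = 0
      rw [hGG, hNN]
    set f := (G ∘ₗ N).restrict hresmem with hf
    have hfinj : Function.Injective f := by
      refine (injective_iff_map_eq_zero f).2 fun x hx => ?_
      have h1 : G (N (x : V)) = 0 := congrArg Subtype.val hx
      have h2 : N (G (x : V)) = 0 := (hmemA _).1 (Submodule.mem_inf.1 x.2).2
      exact Subtype.ext (hinj0 _ h2 h1)
    exact LinearMap.finrank_le_finrank_of_injective hfinj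
  have L3 : ∀ k : ℤ, Module.finrank ℂ ↥(W k ⊓ A)
      = Module.finrank ℂ ↥(W ((m : ℤ) - 1 - k) ⊓ A) := by
    intro k
    refine le_antisymm (le_a k) ?_
    have h := le_a ((m : ℤ) - 1 - k)
    have he : (m : ℤ) - 1 - ((m : ℤ) - 1 - k) = k := by ring
    rwa [he] at h
  -- L4 : duality for B'
  have le_b : ∀ k : ℤ, Module.finrank ℂ ↥(W k ⊓ B')
      ≤ Module.finrank ℂ ↥(W ((m : ℤ) + 1 - k) ⊓ B') := by
    intro k
    haveI := hfin ((m : ℤ) + 1 - k)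
    have hresmem : ∀ x ∈ W k ⊓ B', (N ∘ₗ G) x ∈ W ((m : ℤ) + 1 - k) ⊓ B' := by
      rintro x ⟨hx1, hx2⟩
      refine Submodule.mem_inf.2 ⟨hNGmem k x hx1, (hmemB' _).2 ?_⟩
      show G (N (N (G x))) = 0
      rw [hNN, map_zero]
    set f := (N ∘ₗ G).restrict hresmem with hf
    have hfinj : Function.Injective f := by
      refine (injective_iff_map_eq_zero f).2 fun x hx => ?_
      have h1 : N (G (x : V)) = 0 := congrArg Subtype.val hx
      have h2 : G (N (x : V)) = 0 := (hmemB' _).1 (Submodule.mem_inf.1 x.2).2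
      exact Subtype.ext (hinj0 _ h1 h2)
    exact LinearMap.finrank_le_finrank_of_injective hfinj
  have L4 : ∀ k : ℤ, Module.finrank ℂ ↥(W k ⊓ B')
      = Module.finrank ℂ ↥(W ((m : ℤ) + 1 - k) ⊓ B') := by
    intro k
    refine le_antisymm (le_b k) ?_
    have h := le_b ((m : ℤ) + 1 - k)
    have he : (m : ℤ) + 1 - ((m : ℤ) + 1 - k) = k := by ring
    rwa [he] at h
  -- now the mod 2 arithmetic, in ZMod 2
  set aZ : ℕ → ZMod 2 := fun k => ((Module.finrank ℂ ↥(W (k : ℤ) ⊓ A) : ℕ) : ZMod 2) with haZ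
  set bZ : ℕ → ZMod 2 := fun k => ((Module.finrank ℂ ↥(W (k : ℤ) ⊓ B') : ℕ) : ZMod 2) with hbZ
  have key_a : ∀ k : ℕ, k ≤ 4 * p → aZ (4 * p - k) = aZ k := by
    intro k hk
    have hcast : ((4 * p - k : ℕ) : ℤ) = (m : ℤ) - 1 - (k : ℤ) := by
      push_cast [hm, Nat.cast_sub hk]
      ring
    have h := L3 (k : ℤ)
    rw [← hcast] at h
    simp only [haZ]
    exact congrArg Nat.cast h.symm
  have key_b : ∀ k : ℕ, k ≤ 4 * p + 2 → bZ (4 * p + 2 - k) = bZ k := by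
    intro k hk
    have hcast : ((4 * p + 2 - k : ℕ) : ℤ) = (m : ℤ) + 1 - (k : ℤ) := by
      push_cast [hm, Nat.cast_sub hk]
      ring
    have h := L4 (k : ℤ)
    rw [← hcast] at h
    simp only [hbZ]
    exact congrArg Nat.cast h.symm
  set T := (Finset.range (m + 1)).filter (fun k => Even k) with hT
  have hmemT : ∀ k : ℕ, k ∈ T ↔ k % 2 = 0 ∧ k ≤ 4 * p := by
    intro k
    simp only [hT, Finset.mem_filter, Finset.mem_range, Nat.even_iff, hm]
    omega
  -- sum of aZ over T
  have suma : ∑ k ∈ T, aZ k = aZ (2 * p) := by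
    have h2pT : 2 * p ∈ T := by rw [hmemT]; omega
    rw [← Finset.add_sum_erase T aZ h2pT]
    have hzero : ∑ k ∈ T.erase (2 * p), aZ k = 0 := by
      apply Finset.sum_involution (g := fun k _ => 4 * p - k)
      · intro k hk
        have hk' := (hmemT k).1 (Finset.mem_of_mem_erase hk)
        rw [key_a k hk'.2]
        exact CharTwo.add_self_eq_zero _
      · intro k hk _
        have hne := Finset.ne_of_mem_erase hk
        have hk' := (hmemT k).1 (Finset.mem_of_mem_erase hk)
        omega
      · intro k hk
        have hne := Finset.ne_of_mem_erase hk
        have hk' := (hmemT k).1 (Finset.mem_of_mem_erase hk)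
        refine Finset.mem_erase.2 ⟨by omega, (hmemT _).2 (by omega)⟩
      · intro k hk
        have hk' := (hmemT k).1 (Finset.mem_of_mem_erase hk)
        omega
    rw [hzero, add_zero]
  -- sum of bZ over T
  have sumb : ∑ k ∈ T, bZ k = 0 := by
    set T' := (Finset.range (m + 2)).filter (fun k => Even k) with hT'
    have hmemT' : ∀ k : ℕ, k ∈ T' ↔ k % 2 = 0 ∧ k ≤ 4 * p + 2 := by
      intro k
      simp only [hT', Finset.mem_filter, Finset.mem_range, Nat.even_iff, hm]
      omega
    have hins : T' = insert (4 * p + 2) T := by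
      ext k
      rw [hmemT', Finset.mem_insert, hmemT]
      omega
    have hb0 : bZ (4 * p + 2) = 0 := by
      have hWbot : W ((4 * p + 2 : ℕ) : ℤ) = ⊥ := by
        apply hbot
        right
        push_cast [hm]
        omega
      show ((Module.finrank ℂ ↥(W ((4 * p + 2 : ℕ) : ℤ) ⊓ B') : ℕ) : ZMod 2) = 0
      rw [hWbot, bot_inf_eq]
      simp
    have hsum' : ∑ k ∈ T', bZ k = 0 := by
      apply Finset.sum_involution (g := fun k _ => 4 * p + 2 - k)
      · intro k hk
        have hk' := (hmemT' k).1 hk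
        rw [key_b k hk'.2]
        exact CharTwo.add_self_eq_zero _
      · intro k hk _
        have hk' := (hmemT' k).1 hk
        omega
      · intro k hk
        have hk' := (hmemT' k).1 hk
        exact (hmemT' _).2 (by omega)
      · intro k hk
        have hk' := (hmemT' k).1 hk
        omega
    have hnotmem : 4 * p + 2 ∉ T := by rw [hmemT]; omega
    rw [hins, Finset.sum_insert hnotmem, hb0, zero_add] at hsum'
    exact hsum'
  -- conclude
  rw [← ZMod.natCast_eq_natCast_iff]
  rw [Nat.cast_sum]
  have hsplit : ∑ k ∈ T, ((Module.finrank ℂ (W (k : ℤ)) : ℕ) : ZMod 2)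
      = ∑ k ∈ T, (aZ k + bZ k) := by
    refine Finset.sum_congr rfl fun k _ => ?_
    rw [haZ, hbZ]
    rw [L2 (k : ℤ)]
    push_cast
    ring
  rw [hsplit, Finset.sum_add_distrib, suma, sumb, add_zero]
end

section
/- Let p ≥ 1 and m = 4p − 1. Let V be a complex vector space which is an internal direct sum V = ⊕_{k=0}^m V^k of finite-dimensional subspaces, and ∇, Γ : V → V linear maps with ∇ ∘ ∇ = 0, Γ ∘ Γ = id, ∇(V^k) ⊆ V^{k+1} for all k (where V^j := {0} for j > m), and Γ(V^k) ⊆ V^{m−k} for all k. If B := Γ ∘ ∇ + ∇ ∘ Γ is bijective, then Σ_{k=0, k even}^m dim V^k ≡ dim (V^{2p} ∩ ker(Γ ∘ ∇)) modulo 2. -/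
open Module Submodule LinearMap

/-- If `A` maps `P` into `Q`, `C ∘ A = 0`, and `ker A ∩ ker C = 0`, then
`A` embeds `P ⊓ ker C` into `Q ⊓ ker C`, giving a dimension inequality. -/
private lemma aux_inj_le {V : Type*} [AddCommGroup V] [Module ℂ V]
    (A C : V →ₗ[ℂ] V) (P Q : Submodule ℂ V) [FiniteDimensional ℂ Q]
    (hinj : ∀ v, A v = 0 → C v = 0 → v = 0)
    (hcomp : ∀ x, C (A x) = 0)
    (hmap : Submodule.map A P ≤ Q) :
    finrank ℂ ↥(P ⊓ LinearMap.ker C) ≤ finrank ℂ ↥(Q ⊓ LinearMap.ker C) := by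
  have hMT : ∀ x ∈ P ⊓ LinearMap.ker C, A x ∈ Q ⊓ LinearMap.ker C := by
    intro x hx
    rcases Submodule.mem_inf.mp hx with ⟨hxP, hxC⟩
    exact Submodule.mem_inf.mpr ⟨hmap (Submodule.mem_map_of_mem hxP), hcomp x⟩
  have hf : Function.Injective (A.restrict hMT) := by
    rw [← LinearMap.ker_eq_bot, eq_bot_iff]
    rintro ⟨x, hx⟩ hx0
    rcases Submodule.mem_inf.mp hx with ⟨hxP, hxC⟩
    have hAx : A x = 0 := by
      have := congrArg Subtype.val (LinearMap.mem_ker.mp hx0)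
      simpa [LinearMap.restrict_apply] using this
    have hx' : x = 0 := hinj x hAx hxC
    simp only [Submodule.mem_bot]
    exact Subtype.ext hx'
  exact LinearMap.finrank_le_finrank_of_injective hf

/-- Congruence (stern4) in the proof of Lemma 4.8 of the paper: let `m = 4p - 1`
with `p ≥ 1`, let `V` be a complex vector space graded as an internal direct sum
`V = ⊕_{k=0}^m V^k` of finite-dimensional subspaces (modeled by
`W : ℤ → Submodule ℂ V` with `W j = 0` for `j < 0` or `j > m`), with `∇` a
differential of degree `+1` and `Γ` a chirality operator with `Γ(V^k) ⊆ V^{m-k}`.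
If the odd-signature operator `B = Γ∇ + ∇Γ` is bijective, then
`Σ_{k even, k ≤ m} dim V^k ≡ dim (V^{2p} ∩ ker(Γ ∘ ∇))  (mod 2)`. -/
theorem even_dim_sum_modeq_minus_part
    {V : Type*} [AddCommGroup V] [Module ℂ V]
    (p : ℕ) (hp : 1 ≤ p) (m : ℕ) (hm : m = 4 * p - 1)
    (W : ℤ → Submodule ℂ V)
    (hfin : ∀ k : ℤ, FiniteDimensional ℂ (W k))
    (hbot : ∀ j : ℤ, (j < 0 ∨ (m : ℤ) < j) → W j = ⊥)
    (hinternal : DirectSum.IsInternal W)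
    (N G : V →ₗ[ℂ] V)
    (hN : N ∘ₗ N = 0) (hG : G ∘ₗ G = LinearMap.id)
    (hNdeg : ∀ k : ℤ, Submodule.map N (W k) ≤ W (k + 1))
    (hGdeg : ∀ k : ℤ, Submodule.map G (W k) ≤ W ((m : ℤ) - k))
    (hB : Function.Bijective (G ∘ₗ N + N ∘ₗ G)) :
    (∑ k ∈ (Finset.range (m + 1)).filter (fun k => Even k),
        Module.finrank ℂ (W (k : ℤ)))
      ≡ Module.finrank ℂ ↥(W ((2 * p : ℕ) : ℤ) ⊓ LinearMap.ker (G ∘ₗ N)) [MOD 2] := by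
  haveI : ∀ k : ℤ, FiniteDimensional ℂ (W k) := hfin
  -- V is finite dimensional
  haveI : FiniteDimensional ℂ V := by
    have htop : (⊤ : Submodule ℂ V) ≤ (Finset.Icc (0:ℤ) (m:ℤ)).sup W := by
      rw [← hinternal.submodule_iSup_eq_top]
      refine iSup_le fun j => ?_
      by_cases hj : j ∈ Finset.Icc (0:ℤ) (m:ℤ)
      · exact Finset.le_sup hj
      · rw [hbot j (by simp only [Finset.mem_Icc] at hj; omega)]; exact bot_le
    haveI : FiniteDimensional ℂ ((⊤ : Submodule ℂ V)) :=
      Submodule.finiteDimensional_of_le htop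
    exact Submodule.topEquiv.finiteDimensional
  -- basic algebraic facts
  have hGG : ∀ x, G (G x) = x := fun x => by
    have := LinearMap.ext_iff.mp hG x; simpa using this
  have hNN : ∀ x, N (N x) = 0 := fun x => by
    have := LinearMap.ext_iff.mp hN x; simpa using this
  have hCA : ∀ x, (N ∘ₗ G) ((G ∘ₗ N) x) = 0 := fun x => by
    simp [LinearMap.comp_apply, hGG, hNN]
  have hAC : ∀ x, (G ∘ₗ N) ((N ∘ₗ G) x) = 0 := fun x => by
    simp [LinearMap.comp_apply, hNN]
  have hinj : ∀ v, (G ∘ₗ N) v = 0 → (N ∘ₗ G) v = 0 → v = 0 := by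
    intro v h1 h2
    have : (G ∘ₗ N + N ∘ₗ G) v = (G ∘ₗ N + N ∘ₗ G) 0 := by
      simp [LinearMap.add_apply, h1, h2]
    exact hB.injective this
  -- degree shifts
  have hAmap : ∀ k : ℤ, Submodule.map (G ∘ₗ N) (W k) ≤ W ((m:ℤ) - k - 1) := by
    intro k
    rw [Submodule.map_comp]
    refine le_trans (Submodule.map_mono (hNdeg k)) (le_trans (hGdeg (k+1)) ?_)
    rw [show (m:ℤ) - (k+1) = (m:ℤ) - k - 1 by ring]
  have hCmap : ∀ k : ℤ, Submodule.map (N ∘ₗ G) (W k) ≤ W ((m:ℤ) - k + 1) := by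
    intro k
    rw [Submodule.map_comp]
    exact le_trans (Submodule.map_mono (hGdeg k)) (hNdeg ((m:ℤ) - k))
  set a : ℤ → ℕ := fun k => finrank ℂ ↥(W k ⊓ LinearMap.ker (G ∘ₗ N)) with ha_def
  set c : ℤ → ℕ := fun k => finrank ℂ ↥(W k ⊓ LinearMap.ker (N ∘ₗ G)) with hc_def
  -- pairing equalities
  have hcle : ∀ k : ℤ, c k ≤ c ((m:ℤ) - k - 1) :=
    fun k => aux_inj_le (G ∘ₗ N) (N ∘ₗ G) (W k) (W ((m:ℤ) - k - 1)) hinj hCA (hAmap k)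
  have hale : ∀ k : ℤ, a k ≤ a ((m:ℤ) - k + 1) :=
    fun k => aux_inj_le (N ∘ₗ G) (G ∘ₗ N) (W k) (W ((m:ℤ) - k + 1))
      (fun v h1 h2 => hinj v h2 h1) hAC (hCmap k)
  have hceq : ∀ j k : ℤ, j + k = (m:ℤ) - 1 → c j = c k := by
    intro j k hjk
    have h1 := hcle j
    have h2 := hcle k
    rw [show (m:ℤ) - j - 1 = k by omega] at h1
    rw [show (m:ℤ) - k - 1 = j by omega] at h2
    omega
  have haeq : ∀ j k : ℤ, j + k = (m:ℤ) + 1 → a j = a k := by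
    intro j k hjk
    have h1 := hale j
    have h2 := hale k
    rw [show (m:ℤ) - j + 1 = k by omega] at h1
    rw [show (m:ℤ) - k + 1 = j by omega] at h2
    omega
  -- per-degree dimension split
  have key : ∀ k : ℤ, finrank ℂ ↥(W k) = a k + c k := by
    intro k
    refine le_antisymm ?_ ?_
    · -- rank-nullity for (G∘N) restricted to W k
      have hrn := LinearMap.finrank_range_add_finrank_ker ((G ∘ₗ N).domRestrict (W k))
      have hker : finrank ℂ ↥(LinearMap.ker ((G ∘ₗ N).domRestrict (W k))) = a k := by
        rw [LinearMap.ker_domRestrict]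
        have e := Submodule.equivMapOfInjective (W k).subtype (W k).injective_subtype
          (Submodule.comap (W k).subtype (LinearMap.ker (G ∘ₗ N)))
        rw [Submodule.map_comap_subtype] at e
        exact e.finrank_eq
      have hrange : finrank ℂ ↥(LinearMap.range ((G ∘ₗ N).domRestrict (W k))) ≤ c k := by
        rw [LinearMap.range_domRestrict]
        have hle : Submodule.map (G ∘ₗ N) (W k) ≤
            W ((m:ℤ) - k - 1) ⊓ LinearMap.ker (N ∘ₗ G) := by
          refine le_inf (hAmap k) ?_
          rintro x ⟨y, _, rfl⟩
          exact LinearMap.mem_ker.mpr (hCA y)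
        have := Submodule.finrank_mono hle
        have hcc : c ((m:ℤ) - k - 1) = c k := hceq _ _ (by omega)
        calc finrank ℂ ↥(Submodule.map (G ∘ₗ N) (W k))
            ≤ c ((m:ℤ) - k - 1) := this
          _ = c k := hcc
      omega
    · -- the two pieces sit independently inside W k
      have hdisj : (W k ⊓ LinearMap.ker (G ∘ₗ N)) ⊓ (W k ⊓ LinearMap.ker (N ∘ₗ G)) = ⊥ := by
        rw [eq_bot_iff]
        rintro x hx
        simp only [Submodule.mem_inf, LinearMap.mem_ker] at hx
        exact (Submodule.mem_bot ℂ).mpr (hinj x hx.1.2 hx.2.2)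
      have hsup := Submodule.finrank_sup_add_finrank_inf_eq
        (W k ⊓ LinearMap.ker (G ∘ₗ N)) (W k ⊓ LinearMap.ker (N ∘ₗ G))
      rw [hdisj] at hsup
      simp only [finrank_bot, add_zero] at hsup
      have hle : (W k ⊓ LinearMap.ker (G ∘ₗ N)) ⊔ (W k ⊓ LinearMap.ker (N ∘ₗ G)) ≤ W k :=
        sup_le inf_le_left inf_le_left
      have := Submodule.finrank_mono hle
      simp only [ha_def, hc_def]
      omega
  -- mod-2 bookkeeping
  set s := (Finset.range (m + 1)).filter (fun k => Even k) with hs_def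
  have hmem : ∀ k : ℕ, k ∈ s ↔ k % 2 = 0 ∧ k ≤ m := by
    intro k
    simp only [hs_def, Finset.mem_filter, Finset.mem_range, Nat.even_iff]
    omega
  have h2 : (2 : ZMod 2) = 0 := by decide
  have ha0 : a 0 = 0 := by
    have h1 : a 0 = a ((m:ℤ) + 1) := haeq 0 _ (by omega)
    rw [h1]
    simp only [ha_def]
    rw [hbot ((m:ℤ)+1) (Or.inr (by omega)), bot_inf_eq]
    simp
  apply (ZMod.natCast_eq_natCast_iff _ _ _).mp
  have h2p : (2 * p : ℕ) ∈ s := (hmem _).mpr ⟨by omega, by omega⟩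
  rw [Nat.cast_sum]
  have hsplit : ∀ k ∈ s, ((finrank ℂ ↥(W (k:ℤ)) : ZMod 2))
      = (a (k:ℤ) : ZMod 2) + (c (k:ℤ) : ZMod 2) := by
    intro k _
    rw [key (k:ℤ)]
    push_cast
    ring
  rw [Finset.sum_congr rfl hsplit, Finset.sum_add_distrib]
  have hc0 : ∑ k ∈ s, (c (k:ℤ) : ZMod 2) = 0 := by
    refine Finset.sum_involution (fun k _ => m - 1 - k) ?_ ?_ ?_ ?_
    · intro k hk
      rw [hmem] at hk
      show (c (k:ℤ) : ZMod 2) + (c ((m - 1 - k : ℕ) : ℤ) : ZMod 2) = 0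
      have hpair : c (k:ℤ) = c ((m - 1 - k : ℕ) : ℤ) := by
        apply hceq
        omega
      rw [← hpair]
      calc (c (k:ℤ) : ZMod 2) + (c (k:ℤ)) = 2 * (c (k:ℤ)) := by ring
        _ = 0 := by rw [h2, zero_mul]
    · intro k hk _
      rw [hmem] at hk
      show m - 1 - k ≠ k
      omega
    · intro k hk
      rw [hmem] at hk
      show m - 1 - k ∈ s
      rw [hmem]
      omega
    · intro k hk
      rw [hmem] at hk
      show m - 1 - (m - 1 - k) = k
      omega
  rw [hc0, add_zero]
  rw [← Finset.sum_erase_add s _ h2p]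
  have herase : ∑ k ∈ s.erase (2*p), (a (k:ℤ) : ZMod 2) = 0 := by
    refine Finset.sum_involution (fun k _ => if k = 0 then 0 else 4*p - k) ?_ ?_ ?_ ?_
    · intro k hk
      have hk' := Finset.mem_of_mem_erase hk
      rw [hmem] at hk'
      show (a (k:ℤ) : ZMod 2) + (a (((if k = 0 then 0 else 4*p - k) : ℕ) : ℤ) : ZMod 2) = 0
      by_cases hk0 : k = 0
      · subst hk0
        rw [if_pos rfl]
        norm_num [ha0]
      · rw [if_neg hk0]
        have hpair : a (k:ℤ) = a ((4*p - k : ℕ) : ℤ) := by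
          apply haeq
          omega
        rw [← hpair]
        calc (a (k:ℤ) : ZMod 2) + (a (k:ℤ)) = 2 * (a (k:ℤ)) := by ring
          _ = 0 := by rw [h2, zero_mul]
    · intro k hk hne
      show (if k = 0 then 0 else 4*p - k) ≠ k
      by_cases hk0 : k = 0
      · exfalso
        apply hne
        subst hk0
        norm_num [ha0]
      · rw [if_neg hk0]
        have hkm := Finset.ne_of_mem_erase hk
        have hk' := Finset.mem_of_mem_erase hk
        rw [hmem] at hk'
        omega
    · intro k hk
      have hkm := Finset.ne_of_mem_erase hk
      have hk' := Finset.mem_of_mem_erase hk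
      rw [hmem] at hk'
      show (if k = 0 then 0 else 4*p - k) ∈ s.erase (2*p)
      by_cases hk0 : k = 0
      · rw [if_pos hk0]
        exact Finset.mem_erase.mpr ⟨by omega, (hmem 0).mpr ⟨by omega, by omega⟩⟩
      · rw [if_neg hk0]
        exact Finset.mem_erase.mpr ⟨by omega, (hmem _).mpr ⟨by omega, by omega⟩⟩
    · intro k hk
      have hkm := Finset.ne_of_mem_erase hk
      have hk' := Finset.mem_of_mem_erase hk
      rw [hmem] at hk'
      show (if (if k = 0 then 0 else 4*p - k) = 0 then 0
          else 4*p - (if k = 0 then 0 else 4*p - k)) = k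
      by_cases hk0 : k = 0
      · simp [hk0]
      · rw [if_neg hk0, if_neg (by omega : ¬(4*p - k = 0))]
        omega
  rw [herase, zero_add]
end
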